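/- Let Γ = ⟨a, b, c | a³ = b² = c² = 1, bab = a², bc = cb⟩ (the amalgam D₃ *_{C₂} D₂ amalgamated over ⟨b⟩). There exists a surjective homomorphism φ : Γ → S₄ whose restrictions to the subgroups ⟨a, b⟩ ≅ D₃ and ⟨b, c⟩ ≅ D₂ are injective; consequently ker(φ) is a torsion-free normal subgroup of Γ of index 24. -/

import Mathlib

/-- The relations of `Γ = ⟨a, b, c | a³ = b² = c² = 1, bab = a², bc = cb⟩ ≅ D₃ *_{C₂} D₂`. -/
def amalgamRels : Set (FreeGroup (Fin 3)) :=
  { (FreeGroup.of 0) ^ 3, (FreeGroup.of 1) ^ 2, (FreeGroup.of 2) ^ 2,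
    FreeGroup.of 1 * FreeGroup.of 0 * FreeGroup.of 1 * ((FreeGroup.of 0) ^ 2)⁻¹,
    FreeGroup.of 1 * FreeGroup.of 2 * (FreeGroup.of 1)⁻¹ * (FreeGroup.of 2)⁻¹ }

def Monoid.IsTorsionFree (G : Type*) [Monoid G] : Prop :=
  ∀ g : G, g ≠ 1 → ¬IsOfFinOrder g

/-!
`Γ` is the amalgamated product `D₃ *_{C₂} D₂` of two dihedral groups over a common reflection.
In an amalgamated product every element of finite order is conjugate into a factor: write it as a
reduced word; if the word is cyclically reduced, its powers are reduced words of growing length,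
hence nontrivial, and otherwise conjugating by its last letter shortens it. So a homomorphism that
is injective on both factors has a torsion-free kernel. The map to `S₄` given by
`a ↦ (0 1 2)`, `b ↦ (0 2)`, `c ↦ (0 2)(1 3)` is injective on both dihedral factors (a finite check),
and it is onto because `abc` is the 4-cycle `(0 1 3 2)` and `bc` swaps two of its adjacent points.
-/

open Function

namespace Monoid.PushoutI

variable {ι : Type*} {G : ι → Type*} [∀ i, Group (G i)] {H : Type*} [Group H]
  {φ : ∀ i, H →* G i}

variable (φ) in
def letterProd (l : List (Σ i, G i)) : PushoutI φ :=
  (l.map fun s => of s.1 s.2).prod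

@[simp]
lemma letterProd_nil : letterProd φ [] = 1 := rfl

@[simp]
lemma letterProd_cons (s : Σ i, G i) (l : List (Σ i, G i)) :
    letterProd φ (s :: l) = of s.1 s.2 * letterProd φ l := by
  simp [letterProd]

@[simp]
lemma letterProd_append (l₁ l₂ : List (Σ i, G i)) :
    letterProd φ (l₁ ++ l₂) = letterProd φ l₁ * letterProd φ l₂ := by
  simp [letterProd]

lemma letterProd_flatten_replicate (l : List (Σ i, G i)) (k : ℕ) :
    letterProd φ (List.replicate k l).flatten = letterProd φ l ^ k := by
  simp [letterProd, List.map_flatten, List.prod_flatten, List.map_replicate]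

lemma base_mul_letterProd_cons (h : H) (s : Σ i, G i) (l : List (Σ i, G i)) :
    base φ h * letterProd φ (s :: l) = of s.1 (φ s.1 h * s.2) * letterProd φ l := by
  rw [letterProd_cons, map_mul, of_apply_eq_base, mul_assoc]

variable (φ) in
structure IsReducedList (l : List (Σ i, G i)) : Prop where
  not_mem_range : ∀ s ∈ l, s.2 ∉ (φ s.1).range
  isChain : l.IsChain fun s t => s.1 ≠ t.1

namespace IsReducedList

variable {l : List (Σ i, G i)}

lemma of_append_left {l₁ l₂ : List (Σ i, G i)} (hl : IsReducedList φ (l₁ ++ l₂)) :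
    IsReducedList φ l₁ :=
  ⟨fun s hs => hl.not_mem_range s (List.mem_append_left _ hs), hl.isChain.left_of_append⟩

lemma tail {s : Σ i, G i} (hl : IsReducedList φ (s :: l)) : IsReducedList φ l :=
  ⟨fun t ht => hl.not_mem_range t (List.mem_cons_of_mem _ ht), hl.isChain.tail⟩

lemma cons {i : ι} {g : G i} (hl : IsReducedList φ l) (hg : g ∉ (φ i).range)
    (hhead : ∀ t ∈ l.head?, t.1 ≠ i) : IsReducedList φ (⟨i, g⟩ :: l) where
  not_mem_range := List.forall_mem_cons.2 ⟨hg, hl.not_mem_range⟩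
  isChain := List.isChain_cons.2 ⟨fun t ht => (hhead t ht).symm, hl.isChain⟩

lemma flatten_replicate (hl : IsReducedList φ l)
    (hcyc : ∀ q ∈ l.getLast?, ∀ p ∈ l.head?, q.1 ≠ p.1) (k : ℕ) :
    IsReducedList φ (List.replicate k l).flatten := by
  refine ⟨fun s hs => hl.not_mem_range s ?_, ?_⟩
  · simp only [List.mem_flatten, List.mem_replicate] at hs
    obtain ⟨_, ⟨-, rfl⟩, hs⟩ := hs
    exact hs
  rcases l with _ | ⟨s, l'⟩
  · simp
  rw [List.isChain_flatten (by simp [List.mem_replicate])]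
  refine ⟨by simpa [List.mem_replicate] using fun _ => hl.isChain, ?_⟩
  exact List.isChain_replicate_of_rel _ hcyc

def toWord (hl : IsReducedList φ l) : CoprodI.Word G where
  toList := l
  ne_one s hs h1 := hl.not_mem_range s hs (h1 ▸ one_mem _)
  chain_ne := hl.isChain

lemma letterProd_ne_one (hφ : ∀ i, Injective (φ i)) (hl : IsReducedList φ l) (hne : l ≠ []) :
    letterProd φ l ≠ 1 := by
  intro h1
  have hempty := Reduced.eq_empty_of_mem_range (w := hl.toWord) hφ hl.not_mem_range
    (by rw [show ofCoprodI hl.toWord.prod = letterProd φ l by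
          simp [CoprodI.Word.prod, letterProd, map_list_prod, toWord, Function.comp_def], h1]
        exact one_mem _)
  exact hne (congrArg CoprodI.Word.toList hempty)

lemma not_isOfFinOrder_letterProd (hφ : ∀ i, Injective (φ i)) (hl : IsReducedList φ l)
    (hne : l ≠ []) (hcyc : ∀ q ∈ l.getLast?, ∀ p ∈ l.head?, q.1 ≠ p.1) :
    ¬IsOfFinOrder (letterProd φ l) := by
  rw [isOfFinOrder_iff_pow_eq_one]
  rintro ⟨k, hk, hpow⟩
  refine (hl.flatten_replicate hcyc k).letterProd_ne_one hφ ?_ ?_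
  · simp [hne, hk.ne']
  · rwa [letterProd_flatten_replicate]

end IsReducedList

open IsReducedList in
theorem exists_isConj_of_isOfFinOrder_of_mul_letterProd (hφ : ∀ i, Injective (φ i)) {i : ι}
    (k : G i) {l : List (Σ i, G i)} (hl : IsReducedList φ l) (hhead : ∀ t ∈ l.head?, t.1 ≠ i)
    (hfin : IsOfFinOrder (of i k * letterProd φ l)) :
    ∃ j, ∃ g : G j, IsConj (of i k * letterProd φ l) (of j g) := by
  induction hn : l.length using Nat.strong_induction_on generalizing i k l with
  | _ n ih =>
  rcases l with _ | ⟨t, l'⟩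
  · exact ⟨i, k, by rw [letterProd_nil, mul_one]⟩
  by_cases hk : k ∈ (φ i).range
  · obtain ⟨h, rfl⟩ := hk
    have habsorb : of i (φ i h) * letterProd φ (t :: l') =
        of t.1 (φ t.1 h * t.2) * letterProd φ l' := by
      rw [of_apply_eq_base, base_mul_letterProd_cons]
    rw [habsorb] at hfin ⊢
    exact ih _ (by simp [← hn]) _ hl.tail
      (fun u hu => (List.isChain_cons.1 hl.isChain).1 u hu |>.symm) hfin rfl
  obtain ⟨m, ⟨j, g'⟩, hmq⟩ := (t :: l').eq_nil_or_concat'.resolve_left (List.cons_ne_nil _ _)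
  rw [hmq] at hl hhead hfin hn ⊢
  by_cases hj : j = i
  · subst hj
    have hconj : IsConj (of j k * letterProd φ (m ++ [⟨j, g'⟩]))
        (of j (g' * k) * letterProd φ m) :=
      isConj_iff.2 ⟨of j g', by simp [mul_assoc]⟩
    have hhead' : ∀ u ∈ m.head?, u.1 ≠ j := fun u hu =>
      hhead u (by simp [List.head?_append, Option.mem_def.1 hu])
    obtain ⟨j', g, hg⟩ := ih m.length (by simp [← hn]) (g' * k) hl.of_append_left hhead'
      (hconj.isOfFinOrder hfin) rfl
    exact ⟨j', g, hconj.trans hg⟩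
  · exact absurd (by simpa using hfin) <| not_isOfFinOrder_letterProd hφ (hl.cons hk hhead)
      (List.cons_ne_nil _ _) (by rw [← List.cons_append, List.getLast?_concat]; simpa using hj)

theorem exists_eq_base_mul_letterProd (hφ : ∀ i, Injective (φ i)) (g : PushoutI φ) :
    ∃ h l, IsReducedList φ l ∧ g = base φ h * letterProd φ l := by
  classical
  obtain ⟨d⟩ := NormalWord.transversal_nonempty φ hφ
  obtain ⟨w, rfl⟩ := (NormalWord.equiv (d := d)).symm.surjective g
  have hnot_mem : ∀ s ∈ w.toList, s.2 ∉ (φ s.1).range := fun s hs hrange =>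
    w.ne_one s hs <| congrArg Subtype.val <|
      ((d.compl s.1).equiv_snd_eq_self_of_mem_of_one_mem (one_mem _)
        (w.normalized _ _ hs)).symm.trans
        ((d.compl s.1).equiv_snd_eq_one_of_mem_of_one_mem (d.one_mem s.1) hrange)
  refine ⟨w.head, w.toList, ⟨hnot_mem, w.chain_ne⟩, ?_⟩
  simp [NormalWord.equiv, NormalWord.prod, CoprodI.Word.prod, letterProd, map_list_prod,
    Function.comp_def]

theorem exists_isConj_of_isOfFinOrder [Nonempty ι] (hφ : ∀ i, Injective (φ i))
    {g : PushoutI φ} (hg : IsOfFinOrder g) : ∃ i, ∃ k : G i, IsConj g (of i k) := by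
  obtain ⟨h, l, hl, rfl⟩ := exists_eq_base_mul_letterProd hφ g
  rcases l with _ | ⟨t, l'⟩
  · exact ⟨_, φ (Classical.arbitrary ι) h, by rw [letterProd_nil, mul_one, of_apply_eq_base]⟩
  rw [base_mul_letterProd_cons] at hg ⊢
  exact exists_isConj_of_isOfFinOrder_of_mul_letterProd hφ _ hl.tail
    (fun u hu => (List.isChain_cons.1 hl.isChain).1 u hu |>.symm) hg

theorem eq_one_of_isOfFinOrder_of_mem_ker [Nonempty ι] (hφ : ∀ i, Injective (φ i))
    {K : Type*} [Group K] (f : PushoutI φ →* K) (hf : ∀ i, Injective (f.comp (of i)))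
    {g : PushoutI φ} (hg : IsOfFinOrder g) (hker : g ∈ f.ker) : g = 1 := by
  obtain ⟨i, k, hconj⟩ := exists_isConj_of_isOfFinOrder hφ hg
  have hk : f (of i k) = 1 := isConj_one_right.1 (hker ▸ f.map_isConj hconj)
  rw [← map_one (f.comp (of i)), ← MonoidHom.comp_apply] at hk
  rwa [hf i hk, map_one, isConj_one_left] at hconj

end Monoid.PushoutI

section ZModPowers

variable {K : Type*} [Group K]

def zmodPowersHom (n : ℕ) (x : K) (hx : x ^ n = 1) : Multiplicative (ZMod n) →* K :=
  AddMonoidHom.toMultiplicativeLeft <| ZMod.lift n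
    ⟨zmultiplesHom _ (Additive.ofMul x), by
      rw [zmultiplesHom_apply, natCast_zsmul, ← ofMul_pow, hx, ofMul_one]⟩

@[simp]
lemma zmodPowersHom_intCast {n : ℕ} {x : K} (hx : x ^ n = 1) (k : ℤ) :
    zmodPowersHom n x hx (.ofAdd k) = x ^ k := by
  rw [zmodPowersHom, AddMonoidHom.coe_toMultiplicativeLeft, comp_apply, comp_apply, toAdd_ofAdd,
    ZMod.lift_coe, zmultiplesHom_apply, toMul_zsmul, toMul_ofMul]

lemma zmodPowersHom_ofAdd_one {n : ℕ} {x : K} (hx : x ^ n = 1) :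
    zmodPowersHom n x hx (.ofAdd 1) = x := by
  rw [← Int.cast_one, zmodPowersHom_intCast, zpow_one]

lemma MonoidHom.ext_multiplicative_zmod {n : ℕ} {f g : Multiplicative (ZMod n) →* K}
    (h : f (.ofAdd 1) = g (.ofAdd 1)) : f = g := by
  refine MonoidHom.ext fun a => ?_
  obtain ⟨k, hk⟩ := ZMod.intCast_surjective a.toAdd
  rw [← ofAdd_toAdd a, ← hk, ← zsmul_one, ofAdd_zsmul, map_zpow, map_zpow, h]

end ZModPowers

namespace DihedralGroup

variable {n : ℕ} {K : Type*} [Group K]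

def lift (x y : K) (hx : x ^ n = 1) (hy : y ^ 2 = 1) (hxy : y * x * y⁻¹ = x⁻¹) :
    DihedralGroup n →* K where
  toFun
    | r i => zmodPowersHom n x hx (.ofAdd i)
    | sr i => y * zmodPowersHom n x hx (.ofAdd i)
  map_one' := map_one (zmodPowersHom n x hx)
  map_mul' := by
    set ρ := zmodPowersHom n x hx
    have hswap : ∀ i : ZMod n, ρ (.ofAdd i) * y = y * ρ (.ofAdd (-i)) := by
      intro i
      obtain ⟨k, rfl⟩ := ZMod.intCast_surjective i
      rw [← Int.cast_neg, zmodPowersHom_intCast, zmodPowersHom_intCast, ← eq_mul_inv_iff_mul_eq,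
        ← conj_zpow, hxy, inv_zpow', neg_neg]
    rintro (i | i) (j | j)
    · show ρ (.ofAdd (i + j)) = ρ (.ofAdd i) * ρ (.ofAdd j)
      rw [ofAdd_add, map_mul]
    · show y * ρ (.ofAdd (j - i)) = ρ (.ofAdd i) * (y * ρ (.ofAdd j))
      rw [← mul_assoc, hswap, mul_assoc, ← map_mul, ← ofAdd_add, neg_add_eq_sub]
    · show y * ρ (.ofAdd (i + j)) = y * ρ (.ofAdd i) * ρ (.ofAdd j)
      rw [ofAdd_add, map_mul, mul_assoc]
    · show ρ (.ofAdd (j - i)) = y * ρ (.ofAdd i) * (y * ρ (.ofAdd j))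
      rw [← mul_assoc, mul_assoc y, hswap, ← mul_assoc, ← sq, hy, one_mul, ← map_mul, ← ofAdd_add,
        neg_add_eq_sub]

variable (x y : K) (hx : x ^ n = 1) (hy : y ^ 2 = 1) (hxy : y * x * y⁻¹ = x⁻¹)

@[simp]
lemma lift_r_one : lift x y hx hy hxy (r 1) = x :=
  zmodPowersHom_ofAdd_one hx

@[simp]
lemma lift_sr_zero : lift x y hx hy hxy (sr 0) = y := by
  show y * zmodPowersHom n x hx (.ofAdd 0) = y
  rw [ofAdd_zero, map_one, mul_one]

def reflectionHom (n : ℕ) : Multiplicative (ZMod 2) →* DihedralGroup n :=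
  zmodPowersHom 2 (sr 0) (by rw [sq, sr_mul_self])

lemma reflectionHom_injective : Injective (reflectionHom n) := by
  refine (injective_iff_map_eq_one _).2 fun a ha => ?_
  fin_cases a
  · rfl
  · change reflectionHom n (.ofAdd 1) = 1 at ha
    rw [reflectionHom, zmodPowersHom_ofAdd_one, one_def] at ha
    exact absurd ha nofun

lemma lift_comp_reflectionHom :
    (lift x y hx hy hxy).comp (reflectionHom n) = zmodPowersHom 2 y hy := by
  refine MonoidHom.ext_multiplicative_zmod ?_
  rw [MonoidHom.comp_apply, reflectionHom, zmodPowersHom_ofAdd_one, lift_sr_zero,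
    zmodPowersHom_ofAdd_one]

end DihedralGroup

abbrev DihedralAmalgam {ι : Type*} (n : ι → ℕ) :=
  Monoid.PushoutI fun i => DihedralGroup.reflectionHom (n i)

namespace DihedralAmalgam

open Monoid.PushoutI DihedralGroup

variable {ι : Type*} {n : ι → ℕ}

def rotation (i : ι) : DihedralAmalgam n := of i (r 1)

def reflection : DihedralAmalgam n := base _ (Multiplicative.ofAdd 1)

lemma of_sr_zero (i : ι) : (of i (sr 0) : DihedralAmalgam n) = reflection := by
  rw [reflection, ← of_apply_eq_base _ i, reflectionHom, zmodPowersHom_ofAdd_one]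

lemma rotation_mem_range (i : ι) : (rotation i : DihedralAmalgam n) ∈ (of i).range :=
  ⟨r 1, rfl⟩

lemma reflection_mem_range (i : ι) : (reflection : DihedralAmalgam n) ∈ (of i).range :=
  ⟨sr 0, of_sr_zero i⟩

lemma rotation_pow (i : ι) : (rotation i : DihedralAmalgam n) ^ n i = 1 := by
  rw [rotation, ← map_pow, r_one_pow_n, map_one]

lemma reflection_sq : (reflection : DihedralAmalgam n) ^ 2 = 1 := by
  rw [reflection, ← map_pow, ← ofAdd_nsmul, show (2 • 1 : ZMod 2) = 0 from rfl, ofAdd_zero,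
    map_one]

lemma reflection_mul_rotation_mul_inv (i : ι) :
    reflection * rotation i * reflection⁻¹ = (rotation i : DihedralAmalgam n)⁻¹ := by
  rw [← of_sr_zero i, rotation, ← map_inv, ← map_mul, ← map_mul, ← map_inv]
  simp [sr_mul_r, sr_mul_sr]

variable {K : Type*} [Group K] (x : ι → K) (y : K) (hx : ∀ i, x i ^ n i = 1) (hy : y ^ 2 = 1)
  (hxy : ∀ i, y * x i * y⁻¹ = (x i)⁻¹)

def lift : DihedralAmalgam n →* K :=
  Monoid.PushoutI.lift (fun i => DihedralGroup.lift (x i) y (hx i) hy (hxy i))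
    (zmodPowersHom 2 y hy) fun _ => lift_comp_reflectionHom _ _ _ _ _

lemma lift_comp_of (i : ι) :
    (lift x y hx hy hxy).comp (of i) = DihedralGroup.lift (x i) y (hx i) hy (hxy i) :=
  MonoidHom.ext fun _ => by rw [MonoidHom.comp_apply, lift, Monoid.PushoutI.lift_of]

@[simp]
lemma lift_rotation (i : ι) : lift x y hx hy hxy (rotation i) = x i := by
  rw [rotation, lift, Monoid.PushoutI.lift_of, DihedralGroup.lift_r_one]

@[simp]
lemma lift_reflection : lift x y hx hy hxy reflection = y := by
  rw [reflection, lift, Monoid.PushoutI.lift_base, zmodPowersHom_ofAdd_one]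

end DihedralAmalgam

section Amalgam

open DihedralAmalgam

local notation "Γ" => PresentedGroup amalgamRels

lemma amalgamRels_iff {K : Type*} [Group K] (x y z : K) :
    (∀ r ∈ amalgamRels, FreeGroup.lift ![x, y, z] r = 1) ↔
      x ^ 3 = 1 ∧ y ^ 2 = 1 ∧ z ^ 2 = 1 ∧ y * x * y⁻¹ = x⁻¹ ∧ y * z * y⁻¹ = z⁻¹ := by
  simp only [amalgamRels, Set.mem_insert_iff, Set.mem_singleton_iff, forall_eq_or_imp, forall_eq,
    map_mul, map_pow, map_inv, FreeGroup.lift_apply_of, Matrix.cons_val_zero, Matrix.cons_val_one,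
    Matrix.cons_val_two, Matrix.tail_cons, Matrix.head_cons]
  refine and_congr_right fun hx => and_congr_right fun hy => and_congr_right fun hz => ?_
  have hxinv : x⁻¹ = x ^ 2 := inv_eq_of_mul_eq_one_right (by rw [← pow_succ', hx])
  have hyinv : y⁻¹ = y := inv_eq_of_mul_eq_one_right (by rw [← sq, hy])
  have hzinv : z⁻¹ = z := inv_eq_of_mul_eq_one_right (by rw [← sq, hz])
  rw [mul_inv_eq_one, mul_inv_eq_one, hxinv, hyinv, hzinv]

def toDihedralAmalgam : Γ →* DihedralAmalgam ![3, 2] :=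
  PresentedGroup.toGroup <| (amalgamRels_iff (rotation 0) reflection (rotation 1)).2
    ⟨rotation_pow 0, reflection_sq, rotation_pow 1, reflection_mul_rotation_mul_inv 0,
      reflection_mul_rotation_mul_inv 1⟩

def ofDihedralAmalgam : DihedralAmalgam ![3, 2] →* Γ :=
  have hmk : FreeGroup.lift ![.of 0, .of 1, .of 2] = PresentedGroup.mk amalgamRels :=
    FreeGroup.ext_hom _ _ fun i => by fin_cases i <;> rfl
  have h := (amalgamRels_iff (.of 0 : Γ) (.of 1) (.of 2)).1 fun r hr => by
    rw [hmk]
    exact PresentedGroup.one_of_mem hr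
  DihedralAmalgam.lift ![.of 0, .of 2] (.of 1) (Fin.forall_fin_two.2 ⟨h.1, h.2.2.1⟩) h.2.1
    (Fin.forall_fin_two.2 h.2.2.2)

lemma toDihedralAmalgam_of (i : Fin 3) :
    toDihedralAmalgam (.of i) = ![rotation 0, reflection, rotation 1] i :=
  PresentedGroup.toGroup.of _

lemma toDihedralAmalgam_injective : Injective toDihedralAmalgam := by
  refine LeftInverse.injective (g := ofDihedralAmalgam) fun g => ?_
  rw [← MonoidHom.comp_apply, show ofDihedralAmalgam.comp toDihedralAmalgam = MonoidHom.id Γ from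
    PresentedGroup.ext fun i => by fin_cases i <;> simp [toDihedralAmalgam_of, ofDihedralAmalgam]]
  rfl

open Equiv

def permGens : Fin 3 → Perm (Fin 4) := ![swap 0 1 * swap 1 2, swap 0 2, swap 0 2 * swap 1 3]

def toPerm : DihedralAmalgam ![3, 2] →* Perm (Fin 4) :=
  DihedralAmalgam.lift ![permGens 0, permGens 2] (permGens 1) (by decide) (by decide) (by decide)

lemma toPerm_comp_of_injective (i : Fin 2) : Injective (toPerm.comp (Monoid.PushoutI.of i)) := by
  rw [toPerm, lift_comp_of]
  fin_cases i
  · show Injective (DihedralGroup.lift (n := 3) _ _ _ _ _)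
    decide
  · show Injective (DihedralGroup.lift (n := 2) _ _ _ _ _)
    decide

def presentedToPerm : Γ →* Perm (Fin 4) := toPerm.comp toDihedralAmalgam

lemma presentedToPerm_of (i : Fin 3) : presentedToPerm (.of i) = permGens i := by
  fin_cases i <;> simp [presentedToPerm, toDihedralAmalgam_of, toPerm]

lemma presentedToPerm_surjective : Surjective presentedToPerm := by
  have hcycle : (permGens 0 * permGens 1 * permGens 2).IsCycle := by
    rw [show permGens 0 * permGens 1 * permGens 2 = [0, 1, 3, 2].formPerm by decide]
    exact List.isCycle_formPerm (by decide) (by decide)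
  have htop := Perm.closure_cycle_adjacent_swap hcycle (by decide) 1
  rw [show swap 1 ((permGens 0 * permGens 1 * permGens 2) 1) = permGens 1 * permGens 2 by decide]
    at htop
  rw [← MonoidHom.range_eq_top, eq_top_iff, ← htop, Subgroup.closure_le, Set.insert_subset_iff,
    Set.singleton_subset_iff]
  exact ⟨⟨.of 0 * .of 1 * .of 2, by simp [presentedToPerm_of]⟩,
    ⟨.of 1 * .of 2, by simp [presentedToPerm_of]⟩⟩

lemma injOn_presentedToPerm_closure {s : Set Γ} (i : Fin 2)
    (hs : ∀ g ∈ s, toDihedralAmalgam g ∈ (Monoid.PushoutI.of i).range) :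
    Set.InjOn presentedToPerm (Subgroup.closure s) := by
  have hle : Subgroup.closure s ≤ Subgroup.comap toDihedralAmalgam (Monoid.PushoutI.of i).range :=
    (Subgroup.closure_le _).2 hs
  exact (Injective.injOn_range (g := toPerm) (toPerm_comp_of_injective i)).comp
    toDihedralAmalgam_injective.injOn fun _ hg => hle hg

lemma isTorsionFree_ker_presentedToPerm : Monoid.IsTorsionFree presentedToPerm.ker := by
  intro g hg1 hfin
  refine hg1 (Subtype.ext (toDihedralAmalgam_injective ?_))
  rw [OneMemClass.coe_one, map_one]
  exact Monoid.PushoutI.eq_one_of_isOfFinOrder_of_mem_ker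
    (fun _ => DihedralGroup.reflectionHom_injective) toPerm toPerm_comp_of_injective
    ((toDihedralAmalgam.comp presentedToPerm.ker.subtype).isOfFinOrder hfin) g.2

end Amalgam

/-- There is a surjection `φ : D₃ *_{C₂} D₂ → S₄` injective on the factors `⟨a,b⟩ ≅ D₃`
and `⟨b,c⟩ ≅ D₂`; hence `ker φ` is a torsion-free normal subgroup of index 24. -/
theorem stmt_17 (a b c : PresentedGroup amalgamRels)
    (ha : a = PresentedGroup.of (rels := amalgamRels) 0)
    (hb : b = PresentedGroup.of (rels := amalgamRels) 1)
    (hc : c = PresentedGroup.of (rels := amalgamRels) 2) :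
    ∃ φ : PresentedGroup amalgamRels →* Equiv.Perm (Fin 4),
      Function.Surjective φ ∧
      Set.InjOn φ (Subgroup.closure {a, b} : Subgroup (PresentedGroup amalgamRels)) ∧
      Set.InjOn φ (Subgroup.closure {b, c} : Subgroup (PresentedGroup amalgamRels)) ∧
      Monoid.IsTorsionFree ↥φ.ker ∧ φ.ker.Normal ∧ φ.ker.index = 24 := by
  subst ha hb hc
  refine ⟨presentedToPerm, presentedToPerm_surjective, ?_, ?_, isTorsionFree_ker_presentedToPerm,
    inferInstance, ?_⟩
  · refine injOn_presentedToPerm_closure 0 ?_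
    simp only [Set.mem_insert_iff, Set.mem_singleton_iff, forall_eq_or_imp, forall_eq,
      toDihedralAmalgam_of]
    exact ⟨DihedralAmalgam.rotation_mem_range 0, DihedralAmalgam.reflection_mem_range 0⟩
  · refine injOn_presentedToPerm_closure 1 ?_
    simp only [Set.mem_insert_iff, Set.mem_singleton_iff, forall_eq_or_imp, forall_eq,
      toDihedralAmalgam_of]
    exact ⟨DihedralAmalgam.reflection_mem_range 1, DihedralAmalgam.rotation_mem_range 1⟩
  · rw [Subgroup.index_ker, MonoidHom.range_eq_top.2 presentedToPerm_surjective, Subgroup.card_top,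
      Nat.card_perm, Nat.card_fin]
    rfl
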